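/- Let σ_n(x,f) denote the Fejér means of the Fourier series of f ∈ L^1(𝕋), and let (θ_n) be a sequence with |θ_n| ≤ C/n for some constant C. Then σ_n(x + θ_n, f) → f(x) as n → ∞ at every Lebesgue point x of f. -/

import Mathlib

open MeasureTheory Real Set Filter Topology

/-!
Using `∫ K_n = 2π` and periodicity, `σ_n(x + θ_n, f) - f(x)` equals
`(1/2π) ∫ K_n(θ_n - u) (f(x + u) - f(x)) du`, so it suffices that `∫ K_n(θ_n - u) G(u) du → 0`
for `G(u) = |f(x + u) - f(x)|`. Since `|θ_n| ≤ C/n`, the shifted kernel is still `O(n)` everywhere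
and `O(1/(n u²))` once `|u| ≥ 2C/n`. Split at `a = D/n`: near `0`, `n · ∫_{-a}^{a} G = o(1)` because
`x` is a Lebesgue point; on `a ≤ |u| ≤ δ` a dyadic decomposition turns `∫_{-h}^{h} G ≤ η h` into
`∫ G(u)/u² ≤ 4η/a`; the rest is `O(1/(n δ²))`.
-/

/-- The Fejér kernel `K_n(t) = (1/(n+1)) (sin((n+1)t/2) / sin(t/2))²`. -/
noncomputable def fejerK (n : ℕ) (t : ℝ) : ℝ :=
  (1 / ((n : ℝ) + 1)) * (Real.sin (((n : ℝ) + 1) * t / 2)) ^ 2 / (Real.sin (t / 2)) ^ 2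

/-- The Fejér means `σ_n(x, f) = (1/2π) ∫_𝕋 K_n(x - t) f(t) dt`. -/
noncomputable def fejerMean (n : ℕ) (f : ℝ → ℝ) (x : ℝ) : ℝ :=
  (1 / (2 * π)) * ∫ t in (-π)..π, fejerK n (x - t) * f t

lemma abs_sin_nat_mul_le (m : ℕ) (u : ℝ) : |sin (m * u)| ≤ m * |sin u| := by
  induction m with
  | zero => simp
  | succ k ih =>
    calc |sin ((k + 1 : ℕ) * u)| = |sin (k * u) * cos u + cos (k * u) * sin u| := by
          push_cast; rw [add_mul, one_mul, sin_add]
      _ ≤ |sin (k * u)| * |cos u| + |cos (k * u)| * |sin u| := by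
          rw [← abs_mul, ← abs_mul]; exact abs_add_le _ _
      _ ≤ k * |sin u| * 1 + 1 * |sin u| := by
          gcongr
          exacts [abs_cos_le_one _, abs_cos_le_one _]
      _ = (k + 1 : ℕ) * |sin u| := by push_cast; ring

lemma abs_le_eight_mul_abs_sin {v : ℝ} (hv : |v| ≤ 3 * π / 4) : |v| ≤ 8 * |sin v| := by
  wlog hv₀ : 0 ≤ v generalizing v
  · simpa using this (v := -v) (by rwa [abs_neg]) (by linarith)
  rw [abs_of_nonneg hv₀] at hv ⊢
  rcases le_total v (π / 2) with hv' | hv'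
  · have h₁ := mul_abs_le_abs_sin (x := v) (by rwa [abs_of_nonneg hv₀])
    rw [abs_of_nonneg hv₀] at h₁
    have h₂ : v / 2 ≤ 2 / π * v := by
      rw [div_mul_eq_mul_div, le_div_iff₀ pi_pos]; nlinarith [pi_le_four]
    linarith [abs_nonneg (sin v)]
  · have h₁ := mul_le_sin (x := π - v) (by linarith) (by linarith)
    rw [sin_pi_sub] at h₁
    have h₂ : 1 / 2 ≤ 2 / π * (π - v) := by
      rw [div_mul_eq_mul_div, le_div_iff₀ pi_pos]; linarith
    linarith [le_abs_self (sin v), pi_le_four]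

lemma fejerK_nonneg (n : ℕ) (t : ℝ) : 0 ≤ fejerK n t := by
  unfold fejerK; positivity

lemma fejerK_neg (n : ℕ) (t : ℝ) : fejerK n (-t) = fejerK n t := by
  simp only [fejerK, mul_neg, neg_div, sin_neg, neg_sq]

lemma fejerK_periodic (n : ℕ) : Function.Periodic (fejerK n) (2 * π) := by
  intro t
  have h₁ : sin ((t + 2 * π) / 2) ^ 2 = sin (t / 2) ^ 2 := by
    rw [show (t + 2 * π) / 2 = t / 2 + π by ring, sin_add_pi, neg_sq]
  have h₂ : sin ((n + 1) * (t + 2 * π) / 2) ^ 2 = sin ((n + 1) * t / 2) ^ 2 := by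
    rw [show (n + 1) * (t + 2 * π) / 2 = (n + 1) * t / 2 + (n + 1 : ℕ) * π by push_cast; ring,
      sin_add_nat_mul_pi, mul_pow, ← pow_mul, pow_mul', neg_one_sq, one_pow, one_mul]
  simp only [fejerK, h₁, h₂]

lemma measurable_fejerK (n : ℕ) : Measurable (fejerK n) := by
  unfold fejerK; fun_prop

lemma fejerK_le (n : ℕ) (t : ℝ) : fejerK n t ≤ n + 1 := by
  have hsin : sin ((n + 1) * t / 2) ^ 2 ≤ (n + 1) ^ 2 * sin (t / 2) ^ 2 := by
    have := abs_sin_nat_mul_le (n + 1) (t / 2)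
    push_cast at this
    rw [mul_div_assoc, ← sq_abs, ← sq_abs (sin (t / 2)), ← mul_pow]
    exact pow_le_pow_left₀ (abs_nonneg _) this 2
  rcases eq_or_ne (sin (t / 2)) 0 with h | h
  · simp [fejerK, h]; positivity
  · rw [fejerK, div_le_iff₀ (by positivity)]
    calc 1 / (n + 1) * sin ((n + 1) * t / 2) ^ 2
        ≤ 1 / (n + 1) * ((n + 1) ^ 2 * sin (t / 2) ^ 2) := by gcongr
      _ = (n + 1) * sin (t / 2) ^ 2 := by field_simp

lemma fejerK_le_div_sq {t : ℝ} (ht : |t| ≤ 3 * π / 2) (n : ℕ) :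
    fejerK n t ≤ 256 / ((n + 1) * t ^ 2) := by
  rcases eq_or_ne t 0 with rfl | ht₀
  · -- both sides are `0`, by the convention `x / 0 = 0`
    simp [fejerK]
  have hsin : t ^ 2 / 256 ≤ sin (t / 2) ^ 2 := by
    have := abs_le_eight_mul_abs_sin (v := t / 2) (by rw [abs_div, abs_two]; linarith)
    have := pow_le_pow_left₀ (abs_nonneg _) this 2
    rw [mul_pow, sq_abs, sq_abs] at this
    linarith
  calc fejerK n t ≤ 1 / (n + 1) / (t ^ 2 / 256) := by
        rw [fejerK]
        gcongr
        rw [mul_le_iff_le_one_right (by positivity)]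
        exact sin_sq_le_one _
    _ = 256 / ((n + 1) * t ^ 2) := by field_simp

lemma fejerK_sub_le {u y : ℝ} (hu : |u| ≤ π) (hy : 2 * |y| ≤ |u|) (n : ℕ) :
    fejerK n (y - u) ≤ 1024 / ((n + 1) * u ^ 2) := by
  rcases eq_or_ne u 0 with rfl | hu₀
  · obtain rfl : y = 0 := abs_nonpos_iff.mp (by rw [abs_zero] at hy; linarith)
    simp [fejerK]
  have hyu : u ^ 2 / 4 ≤ (y - u) ^ 2 := by
    have : |u| / 2 ≤ |y - u| := by linarith [abs_sub_abs_le_abs_sub u y, abs_sub_comm u y]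
    have := pow_le_pow_left₀ (by positivity) this 2
    rw [div_pow, sq_abs, sq_abs] at this
    linarith
  calc fejerK n (y - u) ≤ 256 / ((n + 1) * (y - u) ^ 2) :=
        fejerK_le_div_sq (by linarith [abs_sub y u]) n
    _ ≤ 256 / ((n + 1) * (u ^ 2 / 4)) := by gcongr
    _ = 1024 / ((n + 1) * u ^ 2) := by field_simp; ring

noncomputable def dirichletKernel (k : ℕ) (t : ℝ) : ℝ :=
  1 + 2 * ∑ j ∈ Finset.Icc 1 k, cos (j * t)

lemma sin_half_mul_dirichletKernel (k : ℕ) (t : ℝ) :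
    sin (t / 2) * dirichletKernel k t = sin ((2 * k + 1) * (t / 2)) := by
  induction k with
  | zero => simp [dirichletKernel]
  | succ k ih =>
    have h := two_mul_sin_mul_cos (t / 2) ((k + 1) * t)
    rw [show t / 2 - (k + 1) * t = -((2 * k + 1) * (t / 2)) by ring,
      show t / 2 + (k + 1) * t = (2 * (k + 1) + 1) * (t / 2) by ring, sin_neg] at h
    rw [dirichletKernel, Finset.sum_Icc_succ_top (by omega)] at *
    push_cast
    linear_combination ih + h

lemma sin_sq_half_mul_sum_dirichletKernel (n : ℕ) (t : ℝ) :
    sin (t / 2) ^ 2 * ∑ k ∈ Finset.range (n + 1), dirichletKernel k t =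
      sin ((n + 1) * t / 2) ^ 2 := by
  have step (k : ℕ) : sin (t / 2) ^ 2 * dirichletKernel k t =
      sin ((k + 1 : ℕ) * (t / 2)) ^ 2 - sin (k * (t / 2)) ^ 2 := by
    have h := two_mul_sin_mul_sin ((2 * k + 1) * (t / 2)) (t / 2)
    rw [show (2 * k + 1) * (t / 2) - t / 2 = 2 * (k * (t / 2)) by ring,
      show (2 * k + 1) * (t / 2) + t / 2 = 2 * ((k + 1) * (t / 2)) by ring] at h
    rw [sq, mul_assoc, sin_half_mul_dirichletKernel, sin_sq_eq_half_sub, sin_sq_eq_half_sub]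
    push_cast
    linear_combination (1 / 2) * h
  rw [Finset.mul_sum, Finset.sum_congr rfl fun k _ => step k,
    Finset.sum_range_sub (fun i : ℕ => sin (i * (t / 2)) ^ 2)]
  push_cast
  rw [zero_mul, sin_zero]
  ring_nf

lemma integral_dirichletKernel (k : ℕ) : ∫ t in (-π)..π, dirichletKernel k t = 2 * π := by
  have hcos (j : ℕ) (hj : j ∈ Finset.Icc 1 k) : ∫ t in (-π)..π, cos (j * t) = 0 := by
    have hj₀ : (j : ℝ) ≠ 0 := Nat.cast_ne_zero.2 (by simp only [Finset.mem_Icc] at hj; omega)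
    rw [intervalIntegral.integral_comp_mul_left (fun t => cos t) hj₀, integral_cos, mul_neg,
      sin_neg, sin_nat_mul_pi]
    simp
  simp only [dirichletKernel]
  have hsum : Continuous fun t : ℝ => 2 * ∑ j ∈ Finset.Icc 1 k, cos (j * t) := by fun_prop
  rw [intervalIntegral.integral_add intervalIntegrable_const (hsum.intervalIntegrable _ _),
    intervalIntegral.integral_const_mul, intervalIntegral.integral_finsetSum
      fun (j : ℕ) _ => (by fun_prop : Continuous fun t : ℝ => cos (j * t)).intervalIntegrable _ _,
    Finset.sum_congr rfl hcos]
  simp; ring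

lemma fejerK_eq_mean_dirichletKernel (n : ℕ) {t : ℝ} (ht : sin (t / 2) ≠ 0) :
    fejerK n t = 1 / (n + 1) * ∑ k ∈ Finset.range (n + 1), dirichletKernel k t := by
  rw [fejerK, ← sin_sq_half_mul_sum_dirichletKernel]
  field_simp

lemma integral_fejerK (n : ℕ) : ∫ t in (-π)..π, fejerK n t = 2 * π := by
  have hae : ∀ᵐ t, t ∈ uIoc (-π) π →
      fejerK n t = 1 / (n + 1) * ∑ k ∈ Finset.range (n + 1), dirichletKernel k t := by
    filter_upwards [Measure.ae_ne volume 0] with t ht₀ ht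
    rw [uIoc_of_le (by linarith [pi_pos])] at ht
    refine fejerK_eq_mean_dirichletKernel n fun hs => ht₀ ?_
    rw [sin_eq_zero_iff_of_lt_of_lt (by linarith [ht.1, pi_pos]) (by linarith [ht.2, pi_pos])] at hs
    linarith
  rw [intervalIntegral.integral_congr_ae hae, intervalIntegral.integral_const_mul,
    intervalIntegral.integral_finsetSum fun k _ =>
      (by unfold dirichletKernel; fun_prop : Continuous (dirichletKernel k)).intervalIntegrable _ _,
    Finset.sum_congr rfl fun k _ => integral_dirichletKernel k]
  simp
  field_simp

lemma integral_comp_add_left_of_periodic {g : ℝ → ℝ} (hg : Function.Periodic g (2 * π)) (c : ℝ) :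
    ∫ u in (-π)..π, g (c + u) = ∫ u in (-π)..π, g u := by
  have := hg.intervalIntegral_add_eq (c + -π) (-π)
  rwa [show c + -π + 2 * π = c + π by ring, show -π + 2 * π = π by ring,
    ← intervalIntegral.integral_comp_add_left] at this

lemma IntervalIntegrable.fejerK_sub_mul {g : ℝ → ℝ} {a b : ℝ}
    (hg : IntervalIntegrable g volume a b) (n : ℕ) (y : ℝ) :
    IntervalIntegrable (fun u => fejerK n (y - u) * g u) volume a b := by
  rw [intervalIntegrable_iff] at hg ⊢
  refine hg.bdd_mul (c := n + 1)
    ((measurable_fejerK n).comp (measurable_const.sub measurable_id)).aestronglyMeasurable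
    (ae_of_all _ fun u => ?_)
  rw [Real.norm_eq_abs, abs_of_nonneg (fejerK_nonneg _ _)]
  exact fejerK_le _ _

lemma fejerMean_add_sub_eq {f : ℝ → ℝ} {x : ℝ} (hfper : Function.Periodic f (2 * π))
    (hfx : IntervalIntegrable (fun u => f (x + u)) volume (-π) π) (n : ℕ) (y : ℝ) :
    fejerMean n f (x + y) - f x =
      1 / (2 * π) * ∫ u in (-π)..π, fejerK n (y - u) * (f (x + u) - f x) := by
  have hshift : ∫ t in (-π)..π, fejerK n (x + y - t) * f t =
      ∫ u in (-π)..π, fejerK n (y - u) * f (x + u) := by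
    rw [← integral_comp_add_left_of_periodic _ x]
    · simp only [add_sub_add_left_eq_sub]
    · intro t
      dsimp only
      rw [hfper, show x + y - (t + 2 * π) = x + y - t - 2 * π by ring, (fejerK_periodic n).sub_eq]
  have hK : ∫ u in (-π)..π, fejerK n (y - u) = 2 * π := by
    simp_rw [← fejerK_neg n (y - _), neg_sub, sub_eq_neg_add]
    rw [integral_comp_add_left_of_periodic (fejerK_periodic n), integral_fejerK]
  simp only [mul_sub]
  rw [intervalIntegral.integral_sub (hfx.fejerK_sub_mul n y)
      ((intervalIntegrable_const (c := f x)).fejerK_sub_mul n y),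
    intervalIntegral.integral_mul_const, hK, fejerMean, hshift]
  field_simp

lemma IntervalIntegrable.div_sq {H : ℝ → ℝ} {a b : ℝ} (hH : IntervalIntegrable H volume a b)
    (ha : 0 < a) (hb : 0 < b) : IntervalIntegrable (fun u => H u / u ^ 2) volume a b := by
  simp only [div_eq_mul_inv]
  refine hH.mul_continuousOn (ContinuousOn.inv₀ (by fun_prop) fun u hu => ?_)
  have : 0 < u := (lt_min ha hb).trans_le hu.1
  positivity

lemma IntervalIntegrable.mono_Icc {g : ℝ → ℝ} {μ : Measure ℝ} {a b c d : ℝ}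
    (hg : IntervalIntegrable g μ a b) (hc : c ∈ Icc a b) (hd : d ∈ Icc a b) :
    IntervalIntegrable g μ c d :=
  hg.mono_set (uIcc_subset_uIcc (Icc_subset_uIcc hc) (Icc_subset_uIcc hd))

lemma integral_div_sq_le_of_integral_le {H : ℝ → ℝ} {η a : ℝ} (hH : ∀ u, 0 ≤ H u) (ha : 0 < a)
    (hHi : IntervalIntegrable H volume 0 (2 * a)) (hΦ : ∫ u in 0..2 * a, H u ≤ η * (2 * a)) :
    ∫ u in a..2 * a, H u / u ^ 2 ≤ 2 * η / a := by
  have hHi' : IntervalIntegrable H volume a (2 * a) :=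
    hHi.mono_Icc ⟨ha.le, by linarith⟩ ⟨by linarith, le_rfl⟩
  calc ∫ u in a..2 * a, H u / u ^ 2 ≤ ∫ u in a..2 * a, H u / a ^ 2 := by
        refine intervalIntegral.integral_mono_on (by linarith) (hHi'.div_sq ha (by linarith))
          (hHi'.div_const _) fun u hu => ?_
        have := hu.1
        exact div_le_div_of_nonneg_left (hH u) (by positivity) (by gcongr)
    _ = (∫ u in a..2 * a, H u) / a ^ 2 := intervalIntegral.integral_div _ _
    _ ≤ (∫ u in 0..2 * a, H u) / a ^ 2 := by
        gcongr
        exact intervalIntegral.integral_mono_interval ha.le (by linarith) le_rfl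
          (ae_of_all _ fun u => hH u) hHi
    _ ≤ η * (2 * a) / a ^ 2 := by gcongr
    _ = 2 * η / a := by field_simp

lemma integral_div_sq_le_of_forall_integral_le {H : ℝ → ℝ} {η a : ℝ} (m : ℕ)
    (hH : ∀ u, 0 ≤ H u) (ha : 0 < a) (hHi : IntervalIntegrable H volume 0 (2 ^ m * a))
    (hΦ : ∀ h, 0 < h → h ≤ 2 ^ m * a → ∫ u in 0..h, H u ≤ η * h) :
    ∫ u in a..2 ^ m * a, H u / u ^ 2 ≤ 4 * η / a := by
  induction m generalizing a with
  | zero =>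
    have hη : 0 ≤ η := nonneg_of_mul_nonneg_left
      ((intervalIntegral.integral_nonneg ha.le fun u _ => hH u).trans (hΦ a ha (by simp))) ha
    simp only [pow_zero, one_mul, intervalIntegral.integral_same]
    positivity
  | succ m ih =>
    have hb : 2 ^ (m + 1) * a = 2 ^ m * (2 * a) := by ring
    have h2a : 2 * a ≤ 2 ^ m * (2 * a) :=
      le_mul_of_one_le_left (by positivity) (one_le_pow₀ one_le_two)
    rw [hb] at hHi hΦ ⊢
    have h0 : (0 : ℝ) ∈ Icc 0 (2 ^ m * (2 * a)) := ⟨le_rfl, by positivity⟩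
    have h₁ : a ∈ Icc 0 (2 ^ m * (2 * a)) := ⟨ha.le, by linarith⟩
    have h₂ : 2 * a ∈ Icc 0 (2 ^ m * (2 * a)) := ⟨by positivity, h2a⟩
    have h₃ : 2 ^ m * (2 * a) ∈ Icc 0 (2 ^ m * (2 * a)) := ⟨by positivity, le_rfl⟩
    rw [← intervalIntegral.integral_add_adjacent_intervals
      ((hHi.mono_Icc h₁ h₂).div_sq ha (by positivity))
      ((hHi.mono_Icc h₂ h₃).div_sq (by positivity) (by positivity))]
    calc _ ≤ 2 * η / a + 4 * η / (2 * a) :=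
          add_le_add (integral_div_sq_le_of_integral_le hH ha (hHi.mono_Icc h0 h₂)
            (hΦ _ (by positivity) h2a)) (ih (by positivity) hHi hΦ)
      _ = 4 * η / a := by field_simp; ring

lemma IntervalIntegrable.zero_right_and_comp_neg {g : ℝ → ℝ} {L : ℝ}
    (hg : IntervalIntegrable g volume (-L) L) :
    IntervalIntegrable g volume 0 L ∧ IntervalIntegrable (fun u => g (-u)) volume 0 L := by
  have h0 : (0 : ℝ) ∈ uIcc (-L) L := by
    rcases le_total 0 L with h | h
    · exact Icc_subset_uIcc ⟨by linarith, h⟩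
    · exact Icc_subset_uIcc' ⟨h, by linarith⟩
  refine ⟨hg.mono_set (uIcc_subset_uIcc_right h0), ?_⟩
  simpa using ((IntervalIntegrable.iff_comp_neg).mp (hg.mono_set (uIcc_subset_uIcc_left h0))).symm

lemma integral_symm_eq_integral_add_comp_neg {g : ℝ → ℝ} {L : ℝ}
    (hg : IntervalIntegrable g volume (-L) L) :
    ∫ u in (-L)..L, g u = ∫ u in 0..L, (g u + g (-u)) := by
  obtain ⟨hr, hl⟩ := hg.zero_right_and_comp_neg
  rw [intervalIntegral.integral_add hr hl, intervalIntegral.integral_comp_neg, neg_zero, add_comm,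
    intervalIntegral.integral_add_adjacent_intervals _ hr]
  simpa using ((IntervalIntegrable.iff_comp_neg).mp hl).symm

lemma integral_le_of_le_mul_of_le_div_sq {F H : ℝ → ℝ} {L η a B B' : ℝ} (m : ℕ)
    (hH : ∀ u, 0 ≤ H u) (hHi : IntervalIntegrable H volume 0 L)
    (hFi : IntervalIntegrable F volume 0 L) (ha : 0 < a) (hbL : 2 ^ m * a ≤ L)
    (hΦ : ∀ h, 0 < h → h ≤ 2 ^ m * a → ∫ u in 0..h, H u ≤ η * h) (hB : 0 ≤ B) (hB' : 0 ≤ B')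
    (hF_near : ∀ u ∈ Icc 0 a, F u ≤ B * H u) (hF_far : ∀ u ∈ Icc a L, F u ≤ B' * (H u / u ^ 2)) :
    ∫ u in 0..L, F u ≤
      B * (η * a) + B' * (4 * η / a) + B' / (2 ^ m * a) ^ 2 * ∫ u in 0..L, H u := by
  set b := 2 ^ m * a
  have hab : a ≤ b := le_mul_of_one_le_left ha.le (one_le_pow₀ one_le_two)
  have h0 : (0 : ℝ) ∈ Icc 0 L := ⟨le_rfl, by linarith⟩
  have ha' : a ∈ Icc 0 L := ⟨ha.le, by linarith⟩
  have hb' : b ∈ Icc 0 L := ⟨by linarith, hbL⟩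
  have hL' : L ∈ Icc 0 L := ⟨by linarith, le_rfl⟩
  have hnear : ∫ u in 0..a, F u ≤ B * (η * a) :=
    calc ∫ u in 0..a, F u ≤ ∫ u in 0..a, B * H u := intervalIntegral.integral_mono_on ha.le
          (hFi.mono_Icc h0 ha') ((hHi.mono_Icc h0 ha').const_mul B) hF_near
      _ ≤ B * (η * a) := by
          rw [intervalIntegral.integral_const_mul]
          exact mul_le_mul_of_nonneg_left (hΦ a ha hab) hB
  have hmid : ∫ u in a..b, F u ≤ B' * (4 * η / a) :=
    calc ∫ u in a..b, F u ≤ ∫ u in a..b, B' * (H u / u ^ 2) := intervalIntegral.integral_mono_on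
          hab (hFi.mono_Icc ha' hb') (((hHi.mono_Icc ha' hb').div_sq ha (by linarith)).const_mul B')
          fun u hu => hF_far u ⟨hu.1, hu.2.trans hbL⟩
      _ ≤ B' * (4 * η / a) := by
          rw [intervalIntegral.integral_const_mul]
          exact mul_le_mul_of_nonneg_left
            (integral_div_sq_le_of_forall_integral_le m hH ha (hHi.mono_Icc h0 hb') hΦ) hB'
  have hfar : ∫ u in b..L, F u ≤ B' / b ^ 2 * ∫ u in 0..L, H u :=
    calc ∫ u in b..L, F u ≤ ∫ u in b..L, B' / b ^ 2 * H u := by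
          refine intervalIntegral.integral_mono_on hbL (hFi.mono_Icc hb' hL')
            ((hHi.mono_Icc hb' hL').const_mul _) fun u hu =>
              (hF_far u ⟨hab.trans hu.1, hu.2⟩).trans ?_
          have hb₀ : 0 < b := ha.trans_le hab
          rw [mul_div_assoc', div_mul_eq_mul_div]
          exact div_le_div_of_nonneg_left (mul_nonneg hB' (hH u)) (by positivity)
            (by gcongr; exact hu.1)
      _ ≤ B' / b ^ 2 * ∫ u in 0..L, H u := by
          rw [intervalIntegral.integral_const_mul]
          exact mul_le_mul_of_nonneg_left (intervalIntegral.integral_mono_interval hb'.1 hbL le_rfl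
            (ae_of_all _ fun u => hH u) hHi) (by positivity)
  rw [← intervalIntegral.integral_add_adjacent_intervals (hFi.mono_Icc h0 ha')
      (hFi.mono_Icc ha' hL'),
    ← intervalIntegral.integral_add_adjacent_intervals (hFi.mono_Icc ha' hb')
      (hFi.mono_Icc hb' hL')]
  linarith

lemma integral_mul_le_of_forall_integral_le {G κ : ℝ → ℝ} {L η a B B' : ℝ} (m : ℕ)
    (hG : ∀ u, 0 ≤ G u) (hGi : IntervalIntegrable G volume (-L) L) (hκ : ∀ u, 0 ≤ κ u)
    (hκGi : IntervalIntegrable (fun u => κ u * G u) volume (-L) L) (ha : 0 < a)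
    (hbL : 2 ^ m * a ≤ L) (hΦ : ∀ h, 0 < h → h ≤ 2 ^ m * a → ∫ u in (-h)..h, G u ≤ η * h)
    (hκ_near : ∀ u, κ u ≤ B) (hκ_far : ∀ u, a ≤ |u| → |u| ≤ L → κ u ≤ B' / u ^ 2) :
    ∫ u in (-L)..L, κ u * G u ≤
      B * (η * a) + B' * (4 * η / a) + B' / (2 ^ m * a) ^ 2 * ∫ u in (-L)..L, G u := by
  have hab : a ≤ 2 ^ m * a := le_mul_of_one_le_left ha.le (one_le_pow₀ one_le_two)
  have hL : 0 < L := ha.trans_le (hab.trans hbL)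
  have hB' : 0 ≤ B' := by
    have := mul_nonneg ((hκ L).trans (hκ_far L (by rw [abs_of_pos hL]; linarith)
      (abs_of_pos hL).le)) (sq_nonneg L)
    rwa [div_mul_cancel₀ _ (by positivity)] at this
  rw [integral_symm_eq_integral_add_comp_neg hκGi, integral_symm_eq_integral_add_comp_neg hGi]
  refine integral_le_of_le_mul_of_le_div_sq m (fun u => add_nonneg (hG u) (hG (-u)))
    (hGi.zero_right_and_comp_neg.1.add hGi.zero_right_and_comp_neg.2)
    (hκGi.zero_right_and_comp_neg.1.add hκGi.zero_right_and_comp_neg.2) ha hbL (fun h h₀ hh => ?_)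
    ((hκ 0).trans (hκ_near 0)) hB' (fun u _ => ?_) (fun u hu => ?_)
  · rw [← integral_symm_eq_integral_add_comp_neg
      (hGi.mono_Icc ⟨by linarith, by linarith⟩ ⟨by linarith, by linarith⟩)]
    exact hΦ h h₀ hh
  · rw [mul_add]
    exact add_le_add (mul_le_mul_of_nonneg_right (hκ_near u) (hG u))
      (mul_le_mul_of_nonneg_right (hκ_near (-u)) (hG (-u)))
  · have hu₀ : 0 < u := ha.trans_le hu.1
    have hfar (v : ℝ) (hv : |v| = u) : κ v ≤ B' / u ^ 2 := by
      rw [← hv, sq_abs]; exact hκ_far v (hv ▸ hu.1) (hv ▸ hu.2)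
    calc κ u * G u + κ (-u) * G (-u) ≤ B' / u ^ 2 * G u + B' / u ^ 2 * G (-u) :=
          add_le_add (mul_le_mul_of_nonneg_right (hfar u (abs_of_pos hu₀)) (hG u))
            (mul_le_mul_of_nonneg_right (hfar (-u) (by rw [abs_neg, abs_of_pos hu₀])) (hG (-u)))
      _ = B' * ((G u + G (-u)) / u ^ 2) := by ring

lemma integral_mul_le_of_scale {G κ : ℝ → ℝ} {L η δ A D ρ : ℝ} (hG : ∀ u, 0 ≤ G u)
    (hGi : IntervalIntegrable G volume (-L) L) (hκ : ∀ u, 0 ≤ κ u)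
    (hκGi : IntervalIntegrable (fun u => κ u * G u) volume (-L) L) (hD : 0 < D) (hρ : 0 < ρ)
    (hDρ : D * ρ ≤ δ) (hδL : δ ≤ L) (hΦ : ∀ h, 0 < h → h ≤ δ → ∫ u in (-h)..h, G u ≤ η * h)
    (hκ_near : ∀ u, κ u ≤ A / ρ) (hκ_far : ∀ u, D * ρ ≤ |u| → |u| ≤ L → κ u ≤ A * ρ / u ^ 2) :
    ∫ u in (-L)..L, κ u * G u ≤
      (A * D + 4 * A / D) * η + 4 * A * (∫ u in (-L)..L, G u) / δ ^ 2 * ρ := by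
  set M := ∫ u in (-L)..L, G u
  have hM : 0 ≤ M := intervalIntegral.integral_nonneg (by nlinarith) fun u _ => hG u
  have hA : 0 ≤ A := by
    have := (hκ 0).trans (hκ_near 0)
    rwa [le_div_iff₀ hρ, zero_mul] at this
  -- `2 ^ m * (D * ρ)` is the dyadic multiple of the scale lying in `(δ / 2, δ]`.
  obtain ⟨m, hm, hm'⟩ := exists_nat_pow_near ((one_le_div (by positivity)).2 hDρ) one_lt_two
  rw [le_div_iff₀ (by positivity)] at hm
  rw [div_lt_iff₀ (by positivity), pow_succ] at hm'
  have hfar : A * ρ / (2 ^ m * (D * ρ)) ^ 2 * M ≤ 4 * A * M / δ ^ 2 * ρ :=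
    calc A * ρ / (2 ^ m * (D * ρ)) ^ 2 * M = A * ρ * M / (2 ^ m * (D * ρ)) ^ 2 := by ring
      _ ≤ A * ρ * M / (δ / 2) ^ 2 :=
          div_le_div_of_nonneg_left (by positivity) (by nlinarith) (by gcongr <;> linarith)
      _ = 4 * A * M / δ ^ 2 * ρ := by field_simp; ring
  calc ∫ u in (-L)..L, κ u * G u
      ≤ A / ρ * (η * (D * ρ)) + A * ρ * (4 * η / (D * ρ)) + A * ρ / (2 ^ m * (D * ρ)) ^ 2 * M :=
        integral_mul_le_of_forall_integral_le m hG hGi hκ hκGi (by positivity) (hm.trans hδL)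
          (fun h h₀ hh => hΦ h h₀ (hh.trans hm)) hκ_near hκ_far
    _ = (A * D + 4 * A / D) * η + A * ρ / (2 ^ m * (D * ρ)) ^ 2 * M := by field_simp
    _ ≤ (A * D + 4 * A / D) * η + 4 * A * M / δ ^ 2 * ρ := by linarith

lemma eventually_integral_le_mul_of_tendsto {G : ℝ → ℝ}
    (hGx : Tendsto (fun h : ℝ => (1 / (2 * h)) * ∫ u in (-h)..h, G u) (𝓝[>] 0) (𝓝 0))
    {η : ℝ} (hη : 0 < η) : ∀ᶠ h in 𝓝[>] 0, ∫ u in (-h)..h, G u ≤ η * h := by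
  filter_upwards [hGx.eventually (gt_mem_nhds (half_pos hη)), self_mem_nhdsWithin]
    with h hlt (hh : 0 < h)
  rw [one_div, ← div_eq_inv_mul, div_lt_iff₀ (by positivity)] at hlt
  linarith

theorem tendsto_integral_mul_of_tendsto_average {ι : Type*} {l : Filter ι} {G : ℝ → ℝ}
    {k : ι → ℝ → ℝ} {r : ι → ℝ} {L A D : ℝ} (hL : 0 < L)
    (hG : ∀ u, 0 ≤ G u) (hGi : IntervalIntegrable G volume (-L) L)
    (hGx : Tendsto (fun h : ℝ => (1 / (2 * h)) * ∫ u in (-h)..h, G u) (𝓝[>] 0) (𝓝 0))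
    (hr : Tendsto r l (𝓝[>] 0)) (hk : ∀ i u, 0 ≤ k i u)
    (hkGi : ∀ i, IntervalIntegrable (fun u => k i u * G u) volume (-L) L)
    (hk_near : ∀ᶠ i in l, ∀ u, k i u ≤ A / r i)
    (hk_far : ∀ᶠ i in l, ∀ u, D * r i ≤ |u| → |u| ≤ L → k i u ≤ A * r i / u ^ 2) :
    Tendsto (fun i => ∫ u in (-L)..L, k i u * G u) l (𝓝 0) := by
  wlog hD : 0 < D generalizing D
  · refine this (D := 1) ((hk_far.and (hr.eventually self_mem_nhdsWithin)).mono
      fun i ⟨hfar, (hri : 0 < r i)⟩ u hu => hfar u ?_) one_pos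
    nlinarith
  refine tendsto_order.2 ⟨fun b hb => Eventually.of_forall fun i => hb.trans_le
    (intervalIntegral.integral_nonneg (by linarith) fun u _ => mul_nonneg (hk i u) (hG u)),
    fun ε hε => ?_⟩
  obtain ⟨η, hη, hcη⟩ : ∃ η > 0, (A * D + 4 * A / D) * η < ε / 2 := by
    set c := A * D + 4 * A / D
    refine ⟨ε / (2 * (|c| + 1)), by positivity, ?_⟩
    calc c * (ε / (2 * (|c| + 1))) ≤ |c| * (ε / (2 * (|c| + 1))) := by gcongr; exact le_abs_self c
      _ < (|c| + 1) * (ε / (2 * (|c| + 1))) := by gcongr; linarith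
      _ = ε / 2 := by field_simp
  obtain ⟨δ₀, hδ₀, hΦ⟩ :=
    (nhdsGT_basis (0 : ℝ)).eventually_iff.1 (eventually_integral_le_mul_of_tendsto hGx hη)
  set δ := min (δ₀ / 2) L
  have hδ : 0 < δ := by positivity
  have htail : Tendsto (fun i => 4 * A * (∫ u in (-L)..L, G u) / δ ^ 2 * r i) l (𝓝 0) := by
    simpa using (tendsto_nhds_of_tendsto_nhdsWithin hr).const_mul _
  filter_upwards [hk_near, hk_far, hr.eventually (Ioo_mem_nhdsGT (show 0 < δ / D by positivity)),
    htail.eventually (gt_mem_nhds (half_pos hε))] with i hnear hfar hri htail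
  have hest := integral_mul_le_of_scale hG hGi (hk i) (hkGi i) hD hri.1
    ((lt_div_iff₀' hD).1 hri.2).le (min_le_right _ _)
    (fun h h₀ hh => hΦ ⟨h₀, by linarith [min_le_left (δ₀ / 2) L]⟩) hnear hfar
  linarith

/-- Corollary 1: Fejér means along perturbed points `x + θ_n` with
`|θ_n| ≤ C/n` converge to `f(x)` at every Lebesgue point `x` of `f ∈ L¹(𝕋)`. -/
theorem fejer_means_perturbed_convergence
    (f : ℝ → ℝ) (hfper : ∀ t, f (t + 2 * π) = f t)
    (hfint : IntervalIntegrable f volume (-π) π)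
    (θ : ℕ → ℝ) (C : ℝ) (hθ : ∀ n : ℕ, 1 ≤ n → |θ n| ≤ C / n)
    (x : ℝ)
    (hLeb : Tendsto (fun h : ℝ => (1 / (2 * h)) * ∫ t in (-h)..h, |f (x + t) - f x|)
      (𝓝[>] (0 : ℝ)) (𝓝 0)) :
    Tendsto (fun n => fejerMean n f (x + θ n)) atTop (𝓝 (f x)) := by
  have hfx : IntervalIntegrable (fun u => f (x + u)) volume (-π) π := by
    have := Function.Periodic.intervalIntegrable hfper two_pi_pos.ne' (t := -π)
      (by ring_nf; exact hfint) (x + -π) (x + π)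
    simpa using this.comp_add_left x
  have hGi : IntervalIntegrable (fun u => |f (x + u) - f x|) volume (-π) π :=
    (hfx.sub intervalIntegrable_const).abs
  have hK_near : ∀ᶠ n : ℕ in atTop, ∀ u, fejerK n (θ n - u) ≤ 1024 / (n : ℝ)⁻¹ := by
    filter_upwards [eventually_ge_atTop 1] with n hn u
    have : (1 : ℝ) ≤ n := by exact_mod_cast hn
    rw [div_inv_eq_mul]
    linarith [fejerK_le n (θ n - u)]
  have hK_far : ∀ᶠ n : ℕ in atTop, ∀ u, 2 * C * (n : ℝ)⁻¹ ≤ |u| → |u| ≤ π →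
      fejerK n (θ n - u) ≤ 1024 * (n : ℝ)⁻¹ / u ^ 2 := by
    filter_upwards [eventually_ge_atTop 1] with n hn u hu huπ
    have : (0 : ℝ) < n := by exact_mod_cast hn
    refine (fejerK_sub_le huπ (by linarith [hθ n hn, div_eq_mul_inv C (n : ℝ)]) n).trans ?_
    rw [← div_div, ← div_eq_mul_inv]
    gcongr
    linarith
  have hσ := tendsto_integral_mul_of_tendsto_average pi_pos (fun u => abs_nonneg _) hGi hLeb
    (tendsto_inv_atTop_nhdsGT_zero.comp tendsto_natCast_atTop_atTop)
    (fun n u => fejerK_nonneg _ _) (fun n => hGi.fejerK_sub_mul n (θ n)) hK_near hK_far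
  have hσ' := hσ.const_mul (1 / (2 * π))
  rw [mul_zero] at hσ'
  rw [tendsto_iff_norm_sub_tendsto_zero]
  refine squeeze_zero (fun _ => norm_nonneg _) (fun n => ?_) hσ'
  rw [fejerMean_add_sub_eq hfper hfx, norm_mul, Real.norm_of_nonneg (by positivity)]
  gcongr
  refine (intervalIntegral.norm_integral_le_integral_norm (by linarith [pi_pos])).trans_eq ?_
  simp only [norm_mul, Real.norm_eq_abs, abs_of_nonneg (fejerK_nonneg _ _)]
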